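/- Assume that for every d ≥ 2, every n ≥ 1, every α ∈ [0, π/2], and all unit vectors u₁,…,u_n ∈ S^{d−1}, the normalized surface measure of ⋃_j Z(u_j, α) is at most that of ⋃_j Z(v_j, α), where v_j = (cos((j−1)π/n), sin((j−1)π/n), 0, …, 0). Then for every n×n correlation matrix Σ, every t ≥ 0, and h ∼ N(0, Σ), z ∼ N(0, Σ^cos): ℙ[min_i |z_i| ≥ t] ≤ ℙ[min_i |h_i| ≥ t]. -/

import Mathlib

/-!
Write `h = (⟪g, u i⟫)ᵢ` with `g` standard Gaussian and `u i` unit vectors whose Gram matrix is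
`S` (the rows of `√S`); the law of `h` depends only on the Gram matrix, so for `Σᶜᵒˢ` one may
take the evenly spaced normals `v i`. In polar coordinates `g = r • θ`, and the event
`t ≤ minᵢ |⟪g, u i⟫|` meets the sphere of radius `r` in the complement of the union of the
zones `{θ | |⟪θ, u i⟫| < t / r}`. The zone conjecture says that this union is largest for the
`v i`, so, radius by radius, the event is least likely for `Σᶜᵒˢ`.
-/

open Real MeasureTheory ProbabilityTheory

/-- The standard Gaussian measure on `ℝⁿ`. -/
noncomputable def stdGaussianPi (n : ℕ) : Measure (Fin n → ℝ) :=
  Measure.pi fun _ => gaussianReal 0 1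

/- The centered Gaussian measure `N(0, S)` with covariance `S` (junk `0` if `S` is not
positive semidefinite). -/
open Classical in
noncomputable def gaussianOfCov {n : ℕ} (S : Matrix (Fin n) (Fin n) ℝ) :
    Measure (Fin n → ℝ) :=
  if hS : S.PosSemidef then (stdGaussianPi n).map
      ((hS.1.eigenvectorUnitary : Matrix (Fin n) (Fin n) ℝ) *
        Matrix.diagonal (Real.sqrt ∘ hS.1.eigenvalues) *
        (star hS.1.eigenvectorUnitary : Matrix (Fin n) (Fin n) ℝ)).mulVec else 0

/-- The spherical zone `Z(u, α) = {w ∈ S^{d-1} : |⟨w, u⟩| ≤ sin α}`. -/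
def sphericalZone {d : ℕ} (u : EuclideanSpace ℝ (Fin d)) (α : ℝ) :
    Set (EuclideanSpace ℝ (Fin d)) :=
  {w | w ∈ Metric.sphere (0 : EuclideanSpace ℝ (Fin d)) 1 ∧ |(inner ℝ w u : ℝ)| ≤ Real.sin α}

/-- The uniform (normalized surface) probability measure on the unit sphere of `ℝ^d`,
viewed as a measure on the ambient space. -/
noncomputable def uniformSphere (d : ℕ) : Measure (EuclideanSpace ℝ (Fin d)) :=
  ((volume : Measure (EuclideanSpace ℝ (Fin d))).toSphere Set.univ)⁻¹ •
    ((volume : Measure (EuclideanSpace ℝ (Fin d))).toSphere.map Subtype.val)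

/-- The evenly spaced great-subsphere normals `v j = (cos((j-1)π/n), sin((j-1)π/n), 0, …, 0)`
in `ℝ^d` (0-indexed `j`). -/
noncomputable def evenZoneNormal (d n : ℕ) (j : Fin n) : EuclideanSpace ℝ (Fin d) :=
  WithLp.toLp 2 fun k : Fin d => if (k : ℕ) = 0 then Real.cos ((j : ℝ) * π / n)
    else if (k : ℕ) = 1 then Real.sin ((j : ℝ) * π / n) else 0

open Module Matrix
open scoped ENNReal RealInnerProductSpace

section Polar

variable {E : Type*} [NormedAddCommGroup E] [NormedSpace ℝ E] [FiniteDimensional ℝ E]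
  [MeasurableSpace E] [BorelSpace E] [Nontrivial E] (μ : Measure E) [μ.IsAddHaarMeasure]

theorem lintegral_eq_lintegral_volumeIoiPow_toSphere {f : E → ℝ≥0∞} (hf : Measurable f) :
    ∫⁻ x, f x ∂μ = ∫⁻ r, ∫⁻ θ, f (r.1 • θ.1) ∂μ.toSphere
      ∂(Measure.volumeIoiPow (finrank ℝ E - 1)) := by
  have hg : Measurable fun p : Metric.sphere (0 : E) 1 × Set.Ioi (0 : ℝ) => f (p.2.1 • p.1.1) :=
    hf.comp (by fun_prop)
  have hsub : ∫⁻ x, f x ∂μ = ∫⁻ x : ({0}ᶜ : Set E), f x ∂(μ.comap Subtype.val) := by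
    rw [lintegral_subtype_comap (measurableSet_singleton 0).compl, restrict_compl_singleton]
  rw [hsub, ← lintegral_prod_symm _ hg.aemeasurable,
    ← μ.measurePreserving_homeomorphUnitSphereProd.lintegral_comp_emb
      (Homeomorph.measurableEmbedding _)]
  refine lintegral_congr fun x => ?_
  simp [smul_inv_smul₀ (norm_ne_zero_iff.mpr x.2)]

theorem withDensity_norm_apply_le_of_toSphere_le {g : ℝ → ℝ≥0∞} (hg : Measurable g) {A B : Set E}
    (hA : MeasurableSet A) (hB : MeasurableSet B)
    (h : ∀ r : ℝ, 0 < r → μ.toSphere {θ | r • θ.1 ∈ A} ≤ μ.toSphere {θ | r • θ.1 ∈ B}) :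
    μ.withDensity (fun x => g ‖x‖) A ≤ μ.withDensity (fun x => g ‖x‖) B := by
  have polar : ∀ C, MeasurableSet C → μ.withDensity (fun x => g ‖x‖) C =
      ∫⁻ r, g r * μ.toSphere {θ | r.1 • θ.1 ∈ C} ∂(Measure.volumeIoiPow (finrank ℝ E - 1)) := by
    intro C hC
    rw [withDensity_apply _ hC, ← lintegral_indicator hC,
      lintegral_eq_lintegral_volumeIoiPow_toSphere μ (f := C.indicator fun x => g ‖x‖)
        ((hg.comp measurable_norm).indicator hC)]
    refine lintegral_congr fun r => ?_
    have hslice : MeasurableSet {θ : Metric.sphere (0 : E) 1 | r.1 • θ.1 ∈ C} :=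
      hC.preimage (by fun_prop)
    rw [← lintegral_indicator_const hslice]
    refine lintegral_congr fun θ => ?_
    simp [Set.indicator, norm_smul, abs_of_pos (Set.mem_Ioi.mp r.2)]
  rw [polar A hA, polar B hB]
  exact lintegral_mono fun r => mul_le_mul_right (h r r.2) _

end Polar

section MinAbsInner

variable {ι : Type*} {E : Type*} [NormedAddCommGroup E] [InnerProductSpace ℝ E]

noncomputable def minAbsInner (u : ι → E) (x : E) : ℝ := ⨅ i, |⟪x, u i⟫|

theorem measurable_minAbsInner [Countable ι] [MeasurableSpace E] [OpensMeasurableSpace E]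
    (u : ι → E) : Measurable (minAbsInner u) :=
  Measurable.iInf fun i => by fun_prop

theorem minAbsInner_smul (u : ι → E) {r : ℝ} (hr : 0 ≤ r) (x : E) :
    minAbsInner u (r • x) = r * minAbsInner u x := by
  simp [minAbsInner, real_inner_smul_left, abs_mul, abs_of_nonneg hr, Real.mul_iInf_of_nonneg hr]

theorem minAbsInner_nonneg (u : ι → E) (x : E) : 0 ≤ minAbsInner u x :=
  Real.iInf_nonneg fun _ => abs_nonneg _

theorem minAbsInner_le_iff [Finite ι] [Nonempty ι] {u : ι → E} {x : E} {a : ℝ} :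
    minAbsInner u x ≤ a ↔ ∃ i, |⟪x, u i⟫| ≤ a := by
  obtain ⟨i₀, hi₀⟩ := exists_eq_ciInf_of_finite (f := fun i => |⟪x, u i⟫|)
  exact ⟨fun h => ⟨i₀, hi₀ ▸ h⟩,
    fun ⟨i, hi⟩ => (ciInf_le (Finite.bddBelow_range _) i).trans hi⟩

end MinAbsInner

theorem measure_ge_le_of_forall_measure_le_le {X : Type*} [MeasurableSpace X]
    {ν : Measure X} [IsFiniteMeasure ν] {f g : X → ℝ} (hf : Measurable f) (hg : Measurable g)
    (h : ∀ a, ν {x | f x ≤ a} ≤ ν {x | g x ≤ a}) (s : ℝ) :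
    ν {x | s ≤ g x} ≤ ν {x | s ≤ f x} := by
  have hlt : ν {x | f x < s} ≤ ν {x | g x < s} := by
    have hunion : ∀ φ : X → ℝ, {x | φ x < s} = ⋃ k : ℕ, {x | φ x ≤ s - 1 / (k + 1)} := by
      intro φ
      ext x
      simp only [Set.mem_ofPred_eq, Set.mem_iUnion]
      refine ⟨fun hx => ?_, fun ⟨k, hk⟩ => hk.trans_lt (sub_lt_self s Nat.one_div_pos_of_nat)⟩
      obtain ⟨k, hk⟩ := exists_nat_one_div_lt (sub_pos.2 hx)
      exact ⟨k, by linarith⟩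
    have hmono : ∀ φ : X → ℝ, Monotone fun k : ℕ => {x | φ x ≤ s - 1 / (k + 1)} :=
      fun φ k l hkl x hx => hx.trans (sub_le_sub_left (Nat.one_div_le_one_div hkl) s)
    rw [hunion f, hunion g, (hmono f).measure_iUnion, (hmono g).measure_iUnion]
    exact iSup_mono fun k => h _
  have hcompl : ∀ φ : X → ℝ, {x | s ≤ φ x} = {x | φ x < s}ᶜ := fun φ => by
    ext x; simp
  rw [hcompl g, hcompl f, measure_compl (measurableSet_lt hg measurable_const) (measure_ne_top _ _),
    measure_compl (measurableSet_lt hf measurable_const) (measure_ne_top _ _)]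
  exact tsub_le_tsub_left hlt _

section Gaussian

variable {ι : Type*} [Fintype ι]
  {E : Type*} [NormedAddCommGroup E] [InnerProductSpace ℝ E] [FiniteDimensional ℝ E]
  [MeasurableSpace E] [BorelSpace E]
  {F : Type*} [NormedAddCommGroup F] [InnerProductSpace ℝ F] [FiniteDimensional ℝ F]
  [MeasurableSpace F] [BorelSpace F]

noncomputable def gaussianRadialDensity (d : ℕ) (r : ℝ) : ℝ≥0∞ :=
  ENNReal.ofReal ((2 * π) ^ (-(d / 2 : ℝ)) * rexp (-r ^ 2 / 2))

theorem measurable_gaussianRadialDensity (d : ℕ) : Measurable (gaussianRadialDensity d) := by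
  unfold gaussianRadialDensity
  fun_prop

theorem integral_exp_neg_sq_norm_div_two :
    ∫ x : E, rexp (-‖x‖ ^ 2 / 2) = (2 * π) ^ (finrank ℝ E / 2 : ℝ) := by
  convert GaussianFourier.integral_rexp_neg_mul_sq_norm (V := E) (b := 1 / 2) (by norm_num)
    using 3 <;> ring_nf

instance isProbabilityMeasure_withDensity_gaussianRadialDensity : IsProbabilityMeasure
    (volume.withDensity fun x : E => gaussianRadialDensity (finrank ℝ E) ‖x‖) := by
  have hint : Integrable fun x : E => rexp (-‖x‖ ^ 2 / 2) :=
    .of_integral_ne_zero (by rw [integral_exp_neg_sq_norm_div_two]; positivity)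
  constructor
  rw [withDensity_apply _ .univ, Measure.restrict_univ]
  simp only [gaussianRadialDensity]
  rw [← ofReal_integral_eq_lintegral_ofReal (hint.const_mul _) (.of_forall fun x => by positivity),
    integral_const_mul, integral_exp_neg_sq_norm_div_two,
    rpow_neg (by positivity), inv_mul_cancel₀ (by positivity), ENNReal.ofReal_one]

theorem charFun_withDensity_gaussianRadialDensity (t : E) :
    charFun (volume.withDensity fun x : E => gaussianRadialDensity (finrank ℝ E) ‖x‖) t =
      Complex.exp (-‖t‖ ^ 2 / 2) := by
  have hpt : ∀ x : E, (gaussianRadialDensity (finrank ℝ E) ‖x‖).toReal •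
      Complex.exp (⟪x, t⟫ * Complex.I) =
        ((2 * π) ^ (-(finrank ℝ E / 2 : ℝ)) : ℝ) *
          Complex.exp (-(1 / 2 : ℂ) * ‖x‖ ^ 2 + Complex.I * ⟪t, x⟫) := fun x => by
    rw [gaussianRadialDensity, ENNReal.toReal_ofReal (by positivity), Complex.real_smul,
      Complex.ofReal_mul, mul_assoc, Complex.ofReal_exp, ← Complex.exp_add, real_inner_comm]
    push_cast
    ring_nf
  have hc : (((2 * π) ^ (-(finrank ℝ E / 2 : ℝ)) : ℝ) : ℂ) *
      (π / (1 / 2 : ℂ)) ^ (finrank ℝ E / 2 : ℂ) = 1 := by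
    rw [show (π / (1 / 2 : ℂ)) = ((2 * π : ℝ) : ℂ) by push_cast; ring,
      show (finrank ℝ E / 2 : ℂ) = ((finrank ℝ E / 2 : ℝ) : ℂ) by push_cast; ring,
      ← Complex.ofReal_cpow (by positivity), ← Complex.ofReal_mul,
      rpow_neg (by positivity), inv_mul_cancel₀ (by positivity), Complex.ofReal_one]
  rw [charFun_apply, integral_withDensity_eq_integral_toReal_smul
    (f := fun x : E => gaussianRadialDensity (finrank ℝ E) ‖x‖)
    ((measurable_gaussianRadialDensity _).comp measurable_norm)
    (.of_forall fun _ => ENNReal.ofReal_lt_top)]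
  simp_rw [hpt]
  rw [integral_const_mul, GaussianFourier.integral_cexp_neg_mul_sq_norm_add (by norm_num),
    ← mul_assoc, hc, one_mul, Complex.I_sq]
  ring_nf

theorem stdGaussian_eq_withDensity :
    stdGaussian E = volume.withDensity fun x => gaussianRadialDensity (finrank ℝ E) ‖x‖ :=
  Measure.ext_of_charFun (funext fun t => by
    rw [charFun_stdGaussian, charFun_withDensity_gaussianRadialDensity])

theorem charFun_map_stdGaussian_inner (u : ι → E) (t : EuclideanSpace ℝ ι) :
    charFun ((stdGaussian E).map fun x => WithLp.toLp 2 fun i => ⟪x, u i⟫) t =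
      Complex.exp (-‖∑ i, t i • u i‖ ^ 2 / 2) := by
  rw [charFun_apply, integral_map (by fun_prop) (by fun_prop), ← charFun_stdGaussian,
    charFun_apply]
  simp [PiLp.inner_apply, inner_sum, inner_smul_right, mul_comm]

theorem map_stdGaussian_inner_eq_of_gram_eq {u : ι → E} {v : ι → F} (h : gram ℝ u = gram ℝ v) :
    (stdGaussian E).map (fun x i => ⟪x, u i⟫) = (stdGaussian F).map (fun y i => ⟪y, v i⟫) := by
  have hnorm : ∀ w : ι → ℝ, ‖∑ i, w i • u i‖ = ‖∑ i, w i • v i‖ := fun w => by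
    rw [norm_eq_sqrt_real_inner, norm_eq_sqrt_real_inner, ← star_dotProduct_gram_mulVec,
      ← star_dotProduct_gram_mulVec, h]
  apply (MeasurableEquiv.toLp 2 (ι → ℝ)).map_measurableEquiv_injective
  rw [Measure.map_map (by fun_prop) (by fun_prop), Measure.map_map (by fun_prop) (by fun_prop)]
  refine Measure.ext_of_charFun (funext fun t => ?_)
  simp only [Function.comp_def, MeasurableEquiv.coe_toLp]
  rw [charFun_map_stdGaussian_inner, charFun_map_stdGaussian_inner, hnorm]

end Gaussian

theorem stdGaussian_setOf_le_minAbsInner_le {ι : Type*} [Countable ι] {E : Type*}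
    [NormedAddCommGroup E] [InnerProductSpace ℝ E] [FiniteDimensional ℝ E] [MeasurableSpace E]
    [BorelSpace E] [Nontrivial E] {u v : ι → E}
    (h : ∀ s, (volume : Measure E).toSphere {θ | s ≤ minAbsInner v θ} ≤
      (volume : Measure E).toSphere {θ | s ≤ minAbsInner u θ}) (t : ℝ) :
    stdGaussian E {x | t ≤ minAbsInner v x} ≤ stdGaussian E {x | t ≤ minAbsInner u x} := by
  have hslice : ∀ (w : ι → E) {r : ℝ}, 0 < r →
      {θ : Metric.sphere (0 : E) 1 | r • θ.1 ∈ {x | t ≤ minAbsInner w x}} =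
        {θ : Metric.sphere (0 : E) 1 | t / r ≤ minAbsInner w θ} := fun w r hr => by
    ext θ
    simp [minAbsInner_smul w hr.le, div_le_iff₀' hr]
  rw [stdGaussian_eq_withDensity]
  refine withDensity_norm_apply_le_of_toSphere_le volume
    (measurable_gaussianRadialDensity _)
    (measurableSet_le measurable_const (measurable_minAbsInner v))
    (measurableSet_le measurable_const (measurable_minAbsInner u)) fun r hr => ?_
  rw [hslice v hr, hslice u hr]
  exact h (t / r)

section Covariance

variable {ι : Type*} [Fintype ι] [DecidableEq ι] {S : Matrix ι ι ℝ}

theorem Matrix.IsHermitian.eigenvectorUnitary_mul_diagonal_sqrt (hS : S.IsHermitian) :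
    (hS.eigenvectorUnitary : Matrix ι ι ℝ) * diagonal (Real.sqrt ∘ hS.eigenvalues) *
      (star hS.eigenvectorUnitary : Matrix ι ι ℝ) = cfc Real.sqrt S := by
  rw [hS.cfc_eq, IsHermitian.cfc, Unitary.conjStarAlgAut_apply]
  rfl

open scoped MatrixOrder in
theorem Matrix.PosSemidef.gram_rows_cfc_sqrt (hS : S.PosSemidef) :
    gram ℝ (fun i => WithLp.toLp 2 (cfc Real.sqrt S i)) = S := by
  have hsa : (cfc Real.sqrt S)ᵀ = cfc Real.sqrt S := by
    simpa [star_eq_conjTranspose] using (cfc_predicate Real.sqrt S).star_eq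
  have hsq : cfc Real.sqrt S * (cfc Real.sqrt S)ᵀ = S := by
    rw [hsa, ← cfcₙ_eq_cfc, ← CFC.sqrt_eq_real_sqrt S hS.nonneg,
      CFC.sqrt_mul_sqrt_self S hS.nonneg]
  ext i j
  conv_rhs => rw [← hsq]
  simp [gram_apply, mul_apply, PiLp.inner_apply, mul_comm]

end Covariance

section GaussianOfCov

variable {n : ℕ} {E : Type*} [NormedAddCommGroup E] [InnerProductSpace ℝ E]
  [FiniteDimensional ℝ E] [MeasurableSpace E] [BorelSpace E] {S : Matrix (Fin n) (Fin n) ℝ}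

theorem gaussianOfCov_eq_map_stdGaussian_inner (hS : S.PosSemidef) {u : Fin n → E}
    (hu : gram ℝ u = S) :
    gaussianOfCov S = (stdGaussian E).map fun x i => ⟪x, u i⟫ := by
  have hpi : stdGaussianPi n = (stdGaussian (EuclideanSpace ℝ (Fin n))).map WithLp.ofLp := by
    rw [← map_pi_eq_stdGaussian, Measure.map_map (by fun_prop) (by fun_prop)]
    exact Measure.map_id.symm
  rw [gaussianOfCov, dif_pos hS, hS.1.eigenvectorUnitary_mul_diagonal_sqrt, hpi,
    Measure.map_map (by fun_prop) (by fun_prop),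
    ← map_stdGaussian_inner_eq_of_gram_eq (hS.gram_rows_cfc_sqrt.trans hu.symm)]
  -- multiplying by `√S` is taking inner products with its rows
  rfl

theorem gaussianOfCov_setOf_le_iInf_abs (hS : S.PosSemidef) {u : Fin n → E}
    (hu : gram ℝ u = S) (t : ℝ) :
    gaussianOfCov S {h | t ≤ ⨅ i, |h i|} = stdGaussian E {x | t ≤ minAbsInner u x} := by
  rw [gaussianOfCov_eq_map_stdGaussian_inner hS hu,
    Measure.map_apply (by fun_prop) (measurableSet_le measurable_const (by fun_prop))]
  rfl

end GaussianOfCov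

section Zones

variable {d : ℕ}

local notation "σ" => Measure.toSphere (volume : Measure (EuclideanSpace ℝ (Fin d)))

theorem isClosed_sphericalZone (u : EuclideanSpace ℝ (Fin d)) (α : ℝ) :
    IsClosed (sphericalZone u α) := by
  change IsClosed (Metric.sphere 0 1 ∩ {w | |⟪w, u⟫| ≤ Real.sin α})
  exact Metric.isClosed_sphere.inter
    (isClosed_le (continuous_id.inner continuous_const).abs continuous_const)

theorem measurableSet_iUnion_sphericalZone {ι : Type*} [Countable ι]
    (u : ι → EuclideanSpace ℝ (Fin d)) (α : ℝ) : MeasurableSet (⋃ j, sphericalZone (u j) α) :=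
  .iUnion fun j => (isClosed_sphericalZone (u j) α).measurableSet

theorem uniformSphere_le_uniformSphere_iff [Nontrivial (EuclideanSpace ℝ (Fin d))]
    {A B : Set (EuclideanSpace ℝ (Fin d))} (hA : MeasurableSet A) (hB : MeasurableSet B) :
    uniformSphere d A ≤ uniformSphere d B ↔
      σ (Subtype.val ⁻¹' A) ≤ σ (Subtype.val ⁻¹' B) := by
  have : Nonempty (Metric.sphere (0 : EuclideanSpace ℝ (Fin d)) 1) :=
    (NormedSpace.sphere_nonempty.2 zero_le_one).to_subtype
  simp only [uniformSphere, Measure.smul_apply, Measure.map_apply measurable_subtype_coe hA,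
    Measure.map_apply measurable_subtype_coe hB, smul_eq_mul]
  exact ENNReal.mul_le_mul_iff_right (ENNReal.inv_ne_zero.2 (measure_ne_top _ _))
    (ENNReal.inv_ne_top.2 (isOpen_univ.measure_ne_zero _ Set.univ_nonempty))

variable {ι : Type*} [Finite ι] [Nonempty ι]

/-- Levels above `1` cut nothing more out of the unit sphere; clamping to `1` makes the level the
`sin` of an angle in `[0, π / 2]`. -/
theorem setOf_minAbsInner_le_eq_preimage_iUnion_sphericalZone
    {u : ι → EuclideanSpace ℝ (Fin d)} (hu : ∀ i, ‖u i‖ = 1) {a : ℝ} (ha : 0 ≤ a) :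
    {θ : Metric.sphere (0 : EuclideanSpace ℝ (Fin d)) 1 | minAbsInner u θ ≤ a} =
      Subtype.val ⁻¹' ⋃ j, sphericalZone (u j) (arcsin (min a 1)) := by
  have hsin : sin (arcsin (min a 1)) = min a 1 :=
    sin_arcsin (by linarith [le_min ha zero_le_one]) (min_le_right _ _)
  ext θ
  have hle : ∀ i, |⟪(θ : EuclideanSpace ℝ (Fin d)), u i⟫| ≤ 1 := fun i =>
    (abs_real_inner_le_norm _ _).trans (by simp [hu, norm_eq_of_mem_sphere θ])
  simp [sphericalZone, hsin, minAbsInner_le_iff, hle]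

theorem toSphere_setOf_minAbsInner_le_le {u v : ι → EuclideanSpace ℝ (Fin d)}
    (hu : ∀ i, ‖u i‖ = 1) (hv : ∀ i, ‖v i‖ = 1)
    (huv : ∀ α ∈ Set.Icc 0 (π / 2), uniformSphere d (⋃ j, sphericalZone (u j) α) ≤
      uniformSphere d (⋃ j, sphericalZone (v j) α)) (a : ℝ) :
    σ {θ | minAbsInner u θ ≤ a} ≤ σ {θ | minAbsInner v θ ≤ a} := by
  rcases lt_or_ge a 0 with ha | ha
  · have : {θ : Metric.sphere (0 : EuclideanSpace ℝ (Fin d)) 1 | minAbsInner u θ ≤ a} = ∅ :=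
      Set.eq_empty_of_forall_notMem fun θ hθ => (minAbsInner_nonneg u θ).not_gt (hθ.trans_lt ha)
    simp [this]
  obtain ⟨i⟩ := ‹Nonempty ι›
  have : Nontrivial (EuclideanSpace ℝ (Fin d)) :=
    nontrivial_of_ne (u i) 0 (by simp [← norm_ne_zero_iff, hu])
  rw [setOf_minAbsInner_le_eq_preimage_iUnion_sphericalZone hu ha,
    setOf_minAbsInner_le_eq_preimage_iUnion_sphericalZone hv ha,
    ← uniformSphere_le_uniformSphere_iff (measurableSet_iUnion_sphericalZone _ _)
      (measurableSet_iUnion_sphericalZone _ _)]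
  exact huv _ ⟨arcsin_nonneg.2 (le_min ha zero_le_one), arcsin_le_pi_div_two _⟩

end Zones

theorem norm_eq_one_of_gram_apply_self {ι E : Type*} [NormedAddCommGroup E]
    [InnerProductSpace ℝ E] {u : ι → E} {i : ι} (h : gram ℝ u i i = 1) : ‖u i‖ = 1 := by
  rw [norm_eq_sqrt_real_inner, ← gram_apply, h, Real.sqrt_one]

theorem gram_evenZoneNormal {d : ℕ} (hd : 2 ≤ d) (n : ℕ) :
    gram ℝ (evenZoneNormal d n) =
      Matrix.of fun i j : Fin n => Real.cos (π * ((i : ℝ) - (j : ℝ)) / n) := by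
  ext i j
  rw [gram_apply, PiLp.inner_apply, Fintype.sum_eq_add ⟨0, by omega⟩ ⟨1, hd⟩
    (by simp [Fin.ext_iff]) fun k hk => ?_]
  · simp only [evenZoneNormal, of_apply, PiLp.toLp_apply, ↓reduceIte, one_ne_zero,
      RCLike.inner_apply, conj_trivial, ← cos_sub]
    rw [← cos_neg]
    ring_nf
  · have h0 : (k : ℕ) ≠ 0 := fun h => hk.1 (Fin.ext h)
    have h1 : (k : ℕ) ≠ 1 := fun h => hk.2 (Fin.ext h)
    simp [evenZoneNormal, h0, h1]

/-- The volumetric zone conjecture implies the strengthened Litvak conjecture: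
if for all `d ≥ 2`, `n ≥ 1`, `α ∈ [0, π/2]` and unit vectors `u j ∈ S^{d-1}` the normalized
surface measure of `⋃ j Z(u j, α)` is at most that of `⋃ j Z(v j, α)` for the evenly spaced
normals `v j`, then for every `n × n` correlation matrix `S`, every `t ≥ 0`, `h ∼ N(0, S)`
and `z ∼ N(0, Σᶜᵒˢ)` one has `ℙ[min_i |z i| ≥ t] ≤ ℙ[min_i |h i| ≥ t]`. -/
theorem volumetric_zone_implies_stochastic_domination
    (H : ∀ d : ℕ, 2 ≤ d → ∀ n : ℕ, 1 ≤ n → ∀ α ∈ Set.Icc (0 : ℝ) (π / 2),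
      ∀ u : Fin n → EuclideanSpace ℝ (Fin d), (∀ j, ‖u j‖ = 1) →
        uniformSphere d (⋃ j, sphericalZone (u j) α)
          ≤ uniformSphere d (⋃ j, sphericalZone (evenZoneNormal d n j) α)) :
    ∀ n : ℕ, 1 ≤ n → ∀ S : Matrix (Fin n) (Fin n) ℝ, S.PosSemidef →
      (∀ i, S i i = 1) → ∀ t : ℝ, 0 ≤ t →
        gaussianOfCov (Matrix.of fun i j : Fin n =>
            Real.cos (π * ((i : ℝ) - (j : ℝ)) / n)) {z | t ≤ ⨅ i, |z i|}
          ≤ gaussianOfCov S {h | t ≤ ⨅ i, |h i|} := by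
  intro n hn S hS hdiag t _
  obtain rfl | hn2 : n = 1 ∨ 2 ≤ n := by omega
  -- `H` only speaks about `d ≥ 2`; for `n = 1` both covariance matrices are `1`.
  · have hC : (Matrix.of fun i j : Fin 1 => Real.cos (π * ((i : ℝ) - (j : ℝ)) / (1 : ℕ))) = S := by
      ext i j
      fin_cases i; fin_cases j
      simp [hdiag]
    rw [hC]
  have : NeZero n := ⟨by omega⟩
  obtain ⟨u, hu⟩ : ∃ u : Fin n → EuclideanSpace ℝ (Fin n), gram ℝ u = S :=
    ⟨_, hS.gram_rows_cfc_sqrt⟩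
  have hv := gram_evenZoneNormal hn2 n
  have hu1 : ∀ i, ‖u i‖ = 1 := fun i => norm_eq_one_of_gram_apply_self (by rw [hu, hdiag])
  have hv1 : ∀ i, ‖evenZoneNormal n n i‖ = 1 := fun i =>
    norm_eq_one_of_gram_apply_self (by rw [hv]; simp)
  rw [← hv, gaussianOfCov_setOf_le_iInf_abs (posSemidef_gram ℝ _) rfl,
    gaussianOfCov_setOf_le_iInf_abs hS hu]
  refine stdGaussian_setOf_le_minAbsInner_le (fun s => ?_) t
  exact measure_ge_le_of_forall_measure_le_le
    ((measurable_minAbsInner _).comp measurable_subtype_coe)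
    ((measurable_minAbsInner _).comp measurable_subtype_coe)
    (toSphere_setOf_minAbsInner_le_le hu1 hv1 fun α hα => H n hn2 n hn α hα u hu1) s
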